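/- The tropical Sylvester–Gallai theorem fails for stable tropical lines: there exists a set of 4 points in ℝ² such that no stable tropical line determined by the set passes through exactly two of the points. -/

import Mathlib

/-- The half-ray from `v` in direction `d`. -/
def tropRay (v d : ℝ × ℝ) : Set (ℝ × ℝ) := {p | ∃ t : ℝ, 0 ≤ t ∧ p = v + t • d}

/-- The tropical line with vertex `v`. -/
def tropLine (v : ℝ × ℝ) : Set (ℝ × ℝ) :=
  tropRay v (-1, 0) ∪ tropRay v (0, -1) ∪ tropRay v (1, 1)

/-- The tropical line with vertex `w` is a stable line determined by the point set `S` if it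
passes through a subset `T ⊆ S` of at least two points and is either the unique tropical
line through `T` or has a point of `T` as its vertex. -/
def StableDetermined (S : Finset (ℝ × ℝ)) (w : ℝ × ℝ) : Prop :=
  ∃ T : Finset (ℝ × ℝ), T ⊆ S ∧ 2 ≤ T.card ∧ (∀ p ∈ T, p ∈ tropLine w) ∧
    ((∀ w' : ℝ × ℝ, (∀ p ∈ T, p ∈ tropLine w') → w' = w) ∨ w ∈ T)

/-! All four points `(0,1), (1,0), (1,1), (2,2)` lie on the tropical line with vertex `(1,1)`, so
a subset of them that determines a unique tropical line determines this one, which contains all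
four points. A stable line of the other kind has one of the points as vertex, and the lines with
vertex `(0,1)`, `(1,0)` or `(2,2)` meet the configuration only in their vertex. -/

theorem mem_tropLine_iff {p v : ℝ × ℝ} : p ∈ tropLine v ↔
    (p.2 = v.2 ∧ p.1 ≤ v.1) ∨ (p.1 = v.1 ∧ p.2 ≤ v.2) ∨
      (p.1 - v.1 = p.2 - v.2 ∧ v.1 ≤ p.1) := by
  simp only [tropLine, tropRay, Set.mem_union, Set.mem_ofPred_eq, Prod.ext_iff, Prod.fst_add,
    Prod.snd_add, Prod.smul_fst, Prod.smul_snd, smul_eq_mul]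
  constructor
  · rintro ((⟨t, ht, h1, h2⟩ | ⟨t, ht, h1, h2⟩) | ⟨t, ht, h1, h2⟩)
    · exact Or.inl ⟨by linarith, by linarith⟩
    · exact Or.inr (Or.inl ⟨by linarith, by linarith⟩)
    · exact Or.inr (Or.inr ⟨by linarith, by linarith⟩)
  · rintro (⟨h2, h1⟩ | ⟨h1, h2⟩ | ⟨h1, h2⟩)
    · exact Or.inl (Or.inl ⟨v.1 - p.1, by linarith, by linarith, by linarith⟩)
    · exact Or.inl (Or.inr ⟨v.2 - p.2, by linarith, by linarith, by linarith⟩)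
    · exact Or.inr ⟨p.1 - v.1, by linarith, by linarith, by linarith⟩

theorem StableDetermined.eq_or_mem_of_subset_tropLine {S : Finset (ℝ × ℝ)} {v w : ℝ × ℝ}
    (hw : StableDetermined S w) (hS : ∀ p ∈ S, p ∈ tropLine v) : v = w ∨ w ∈ S := by
  obtain ⟨T, hTS, -, -, huniq | hwT⟩ := hw
  · exact Or.inl (huniq v fun p hp => hS p (hTS hp))
  · exact Or.inr (hTS hwT)

noncomputable def stableCounterexample : Finset (ℝ × ℝ) := {(0, 1), (1, 0), (1, 1), (2, 2)}

theorem card_stableCounterexample : stableCounterexample.card = 4 := by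
  simp [stableCounterexample, Finset.card_insert_of_notMem, Prod.ext_iff]

theorem mem_stableCounterexample {p : ℝ × ℝ} :
    p ∈ stableCounterexample ↔ p = (0, 1) ∨ p = (1, 0) ∨ p = (1, 1) ∨ p = (2, 2) := by
  simp [stableCounterexample]

theorem stableCounterexample_subset_tropLine :
    ∀ p ∈ stableCounterexample, p ∈ tropLine (1, 1) := by
  intro p hp
  rcases mem_stableCounterexample.mp hp with rfl | rfl | rfl | rfl <;> norm_num [mem_tropLine_iff]

theorem ncard_inter_tropLine_ne_two {w : ℝ × ℝ} (hw : w ∈ stableCounterexample) :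
    Set.ncard {p : ℝ × ℝ | p ∈ stableCounterexample ∧ p ∈ tropLine w} ≠ 2 := by
  change (↑stableCounterexample ∩ tropLine w).ncard ≠ 2
  rcases mem_stableCounterexample.mp hw with rfl | rfl | rfl | rfl <;>
    simp (disch := norm_num [mem_tropLine_iff]) only [stableCounterexample, Finset.coe_insert,
      Finset.coe_singleton, Set.insert_inter_of_mem, Set.insert_inter_of_notMem,
      Set.singleton_inter_of_mem, Set.singleton_inter_of_notMem] <;> norm_num

/-- The tropical Sylvester–Gallai theorem fails for stable tropical lines: there is a set of
four points such that no stable tropical line determined by the set passes through exactly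
two of the points. -/
theorem sylvester_gallai_fails_for_stable_lines :
    ∃ S : Finset (ℝ × ℝ), S.card = 4 ∧
      ∀ w : ℝ × ℝ, StableDetermined S w →
        Set.ncard {p : ℝ × ℝ | p ∈ S ∧ p ∈ tropLine w} ≠ 2 := by
  refine ⟨stableCounterexample, card_stableCounterexample, fun w hw => ?_⟩
  rcases hw.eq_or_mem_of_subset_tropLine stableCounterexample_subset_tropLine with rfl | hwS
  · exact ncard_inter_tropLine_ne_two (mem_stableCounterexample.mpr (by simp))
  · exact ncard_inter_tropLine_ne_two hwS
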